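/- Let B be a symmetric positive semidefinite n × n real matrix and let S be the set of 0-1 indicator matrices F with rows summing to 1. If F̂ maximizes Tr(GᵀBF) over G ∈ S for B' = BF, i.e., F̂ ∈ argmax_{G ∈ S} Tr(Gᵀ B F), then Tr(F̂ᵀ B F̂) ≥ Tr(Fᵀ B F). -/

import Mathlib

open Matrix

namespace Matrix.PosSemidef

variable {m n : Type*} [Fintype m] [Fintype n] {B : Matrix n n ℝ}

theorem trace_transpose_mul_mul_nonneg (hB : B.PosSemidef) (D : Matrix n m ℝ) :
    0 ≤ trace (Dᵀ * B * D) := by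
  simpa only [conjTranspose_eq_transpose_of_trivial] using
    (hB.conjTranspose_mul_mul_same D).trace_nonneg

theorem trace_transpose_mul_mul_comm (hB : B.PosSemidef) (X Y : Matrix n m ℝ) :
    trace (Yᵀ * B * X) = trace (Xᵀ * B * Y) := by
  have hBT : Bᵀ = B := by
    simpa only [conjTranspose_eq_transpose_of_trivial] using hB.isHermitian.eq
  rw [← trace_transpose, transpose_mul, transpose_mul, transpose_transpose, hBT, Matrix.mul_assoc]

theorem two_mul_trace_le_add (hB : B.PosSemidef) (X Y : Matrix n m ℝ) :
    2 * trace (Xᵀ * B * Y) ≤ trace (Xᵀ * B * X) + trace (Yᵀ * B * Y) := by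
  have hdiff := hB.trace_transpose_mul_mul_nonneg (X - Y)
  have hexpand : trace ((X - Y)ᵀ * B * (X - Y)) = trace (Xᵀ * B * X) - trace (Xᵀ * B * Y)
      - trace (Yᵀ * B * X) + trace (Yᵀ * B * Y) := by
    simp only [transpose_sub, Matrix.sub_mul, Matrix.mul_sub, trace_sub]
    ring
  linarith [hB.trace_transpose_mul_mul_comm X Y]

end Matrix.PosSemidef

theorem mincut_update_increases_general (n K : ℕ) (B : Matrix (Fin n) (Fin n) ℝ)
    (hB : B.PosSemidef)
    (S : Set (Matrix (Fin n) (Fin K) ℝ))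
    (F Fhat : Matrix (Fin n) (Fin K) ℝ) (hF : F ∈ S)
    (hmax : ∀ G ∈ S, Matrix.trace (Gᵀ * B * F) ≤ Matrix.trace (Fhatᵀ * B * F)) :
    Matrix.trace (Fᵀ * B * F) ≤ Matrix.trace (Fhatᵀ * B * Fhat) := by
  have hpolar := hB.two_mul_trace_le_add Fhat F
  linarith [hmax F hF]

theorem mincut_update_increases (n K : ℕ) (B : Matrix (Fin n) (Fin n) ℝ)
    (hB : B.PosSemidef)
    (S : Set (Matrix (Fin n) (Fin K) ℝ))
    (hS : S = {F | (∀ i k, F i k = 0 ∨ F i k = 1) ∧ ∀ i, ∑ k, F i k = 1})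
    (F Fhat : Matrix (Fin n) (Fin K) ℝ) (hF : F ∈ S) (hFhat : Fhat ∈ S)
    (hmax : ∀ G ∈ S, Matrix.trace (Gᵀ * B * F) ≤ Matrix.trace (Fhatᵀ * B * F)) :
    Matrix.trace (Fᵀ * B * F) ≤ Matrix.trace (Fhatᵀ * B * Fhat) :=
  mincut_update_increases_general n K B hB S F Fhat hF hmax
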